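/- Let P be a real n×n orthogonal projection matrix, i.e., P = ZZᵀ for some real n×k matrix Z with ZᵀZ = I_k. Then for every real n×m matrix X and every natural number q ≥ 0, ‖PX‖₂ ≤ (‖P(XXᵀ)^q X‖₂)^{1/(2q+1)}; equivalently, ‖PX‖₂^{2q+1} ≤ ‖P(XXᵀ)^q X‖₂. -/

import Mathlib

/-!
Write `A = X Xᵀ`, `B = P A^q X` and, for a vector `y`, `z = Pᵀ y`. The moments
`m_k = zᵀ A^k z` are nonnegative and log-convex, `m_{k+1}² ≤ m_k m_{k+2}`, because both sides
are Cauchy–Schwarz for inner products of the vectors `A^i z` (or `Xᵀ A^i z`). Log-convexity gives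
`m₁^{2q+1} ≤ m_{2q+1} m₀^{2q}`, where `m₁ = ‖(P X)ᵀ y‖²`, `m_{2q+1} = ‖Bᵀ y‖² ≤ ‖B‖² ‖y‖²` and
`m₀ = ‖Pᵀ y‖² ≤ ‖y‖²` because an orthogonal projection is a contraction. Hence
`‖(P X)ᵀ‖^{2(2q+1)} ≤ ‖B‖²`, and `‖(P X)ᵀ‖ = ‖P X‖`.
-/

open Matrix

/-- The Euclidean norm of a vector in `ℝ^n`. -/
noncomputable def euclNorm {n : ℕ} (x : Fin n → ℝ) : ℝ := Real.sqrt (∑ i, (x i) ^ 2)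

/-- The spectral norm of a real matrix: `sup_{x ≠ 0} ‖Mx‖₂ / ‖x‖₂`. -/
noncomputable def specNorm {m n : ℕ} (M : Matrix (Fin m) (Fin n) ℝ) : ℝ :=
  sSup ((fun x : Fin n → ℝ => euclNorm (M.mulVec x) / euclNorm x) '' {x | x ≠ 0})

open WithLp
open scoped Matrix.Norms.L2Operator

section LogConvex

variable {R : Type*} [CommSemiring R] [LinearOrder R] [IsStrictOrderedRing R]
  {m : ℕ → R} (hm : ∀ k, 0 ≤ m k) (hlog : ∀ k, m (k + 1) ^ 2 ≤ m k * m (k + 2))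
include hm hlog

theorem mul_one_le_succ_mul_zero_of_logConvex (k : ℕ) : m k * m 1 ≤ m (k + 1) * m 0 := by
  induction k with
  | zero => rw [mul_comm]
  | succ k ih =>
    rcases (hm (k + 1)).eq_or_lt with hzero | hpos
    · rw [← hzero, zero_mul]
      exact mul_nonneg (hm _) (hm _)
    refine le_of_mul_le_mul_left ?_ hpos
    calc m (k + 1) * (m (k + 1) * m 1) = m (k + 1) ^ 2 * m 1 := by ring
      _ ≤ m k * m (k + 2) * m 1 := by gcongr; exacts [hm 1, hlog k]
      _ = m (k + 2) * (m k * m 1) := by ring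
      _ ≤ m (k + 2) * (m (k + 1) * m 0) := by gcongr; exact hm _
      _ = m (k + 1) * (m (k + 2) * m 0) := by ring

theorem one_pow_le_mul_zero_pow_of_logConvex (s : ℕ) : m 1 ^ (s + 1) ≤ m (s + 1) * m 0 ^ s := by
  induction s with
  | zero => simp
  | succ s ih =>
    calc m 1 ^ (s + 2) = m 1 ^ (s + 1) * m 1 := pow_succ ..
      _ ≤ m (s + 1) * m 0 ^ s * m 1 := by gcongr; exact hm 1
      _ = m (s + 1) * m 1 * m 0 ^ s := by ring
      _ ≤ m (s + 2) * m 0 * m 0 ^ s :=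
        mul_le_mul_of_nonneg_right (mul_one_le_succ_mul_zero_of_logConvex hm hlog _)
          (pow_nonneg (hm 0) s)
      _ = m (s + 2) * m 0 ^ (s + 1) := by ring

end LogConvex

section GramMoment

variable {ι κ R : Type*} [Fintype ι] [Fintype κ] [CommRing R]

theorem sq_dotProduct_le [LinearOrder R] [IsStrictOrderedRing R] (u v : ι → R) :
    (u ⬝ᵥ v) ^ 2 ≤ (u ⬝ᵥ u) * (v ⬝ᵥ v) := by
  simpa only [dotProduct, sq] using Finset.sum_mul_sq_le_sq_mul_sq Finset.univ u v

theorem dotProduct_self_nonneg [LinearOrder R] [IsStrictOrderedRing R] (v : ι → R) :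
    0 ≤ v ⬝ᵥ v :=
  Fintype.sum_nonneg fun i => mul_self_nonneg (v i)

variable [DecidableEq ι]

def gramMoment (X : Matrix ι κ R) (z : ι → R) (k : ℕ) : R := z ⬝ᵥ ((X * Xᵀ) ^ k *ᵥ z)

variable (X : Matrix ι κ R) (z : ι → R)

theorem gramMoment_zero : gramMoment X z 0 = z ⬝ᵥ z := by
  simp [gramMoment]

theorem gramMoment_add (i j : ℕ) :
    gramMoment X z (i + j) = ((X * Xᵀ) ^ i *ᵥ z) ⬝ᵥ ((X * Xᵀ) ^ j *ᵥ z) := by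
  have hsymm : ((X * Xᵀ) ^ i)ᵀ = (X * Xᵀ) ^ i := by
    rw [transpose_pow, transpose_mul, transpose_transpose]
  rw [gramMoment, pow_add, ← mulVec_mulVec, dotProduct_mulVec, ← mulVec_transpose, hsymm]

theorem gramMoment_add_add_one (i j : ℕ) :
    gramMoment X z (i + j + 1) =
      (Xᵀ *ᵥ (X * Xᵀ) ^ i *ᵥ z) ⬝ᵥ (Xᵀ *ᵥ (X * Xᵀ) ^ j *ᵥ z) := by
  rw [add_assoc, gramMoment_add, pow_succ', ← mulVec_mulVec, ← mulVec_mulVec,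
    dotProduct_mulVec, ← mulVec_transpose]

variable [LinearOrder R] [IsStrictOrderedRing R]

theorem gramMoment_nonneg (k : ℕ) : 0 ≤ gramMoment X z k := by
  obtain ⟨i, rfl | rfl⟩ := Nat.even_or_odd' k
  · rw [two_mul, gramMoment_add X z i i]
    exact dotProduct_self_nonneg _
  · rw [two_mul, gramMoment_add_add_one X z i i]
    exact dotProduct_self_nonneg _

theorem gramMoment_sq_le (k : ℕ) :
    gramMoment X z (k + 1) ^ 2 ≤ gramMoment X z k * gramMoment X z (k + 2) := by
  obtain ⟨i, rfl | rfl⟩ := Nat.even_or_odd' k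
  · rw [show 2 * i + 1 = i + (i + 1) by ring, show 2 * i + 2 = (i + 1) + (i + 1) by ring,
      two_mul, gramMoment_add X z i, gramMoment_add X z i, gramMoment_add X z (i + 1)]
    exact sq_dotProduct_le _ _
  · rw [show 2 * i + 1 + 1 = i + (i + 1) + 1 by ring,
      show 2 * i + 1 + 2 = (i + 1) + (i + 1) + 1 by ring,
      two_mul, gramMoment_add_add_one X z i, gramMoment_add_add_one X z i,
      gramMoment_add_add_one X z (i + 1)]
    exact sq_dotProduct_le _ _

theorem gramMoment_one_pow_le (s : ℕ) :
    gramMoment X z 1 ^ (s + 1) ≤ gramMoment X z (s + 1) * gramMoment X z 0 ^ s :=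
  one_pow_le_mul_zero_pow_of_logConvex (gramMoment_nonneg X z) (gramMoment_sq_le X z) s

end GramMoment

theorem norm_toLp_sq {ι : Type*} [Fintype ι] (v : ι → ℝ) : ‖toLp 2 v‖ ^ 2 = v ⬝ᵥ v := by
  rw [EuclideanSpace.real_norm_sq_eq]
  simp [dotProduct, sq]

namespace Matrix

variable {ι κ μ : Type*} [Fintype ι] [Fintype κ] [Fintype μ] [DecidableEq κ]

theorem l2_opNorm_transpose [DecidableEq ι] (A : Matrix ι κ ℝ) : ‖Aᵀ‖ = ‖A‖ := by
  rw [← conjTranspose_eq_transpose_of_trivial, l2_opNorm_conjTranspose]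

theorem norm_toLp_mulVec_le (A : Matrix ι κ ℝ) (x : κ → ℝ) :
    ‖toLp 2 (A *ᵥ x)‖ ≤ ‖A‖ * ‖toLp 2 x‖ :=
  A.l2_opNorm_mulVec (toLp 2 x)

theorem l2_opNorm_le_bound {A : Matrix ι κ ℝ} {C : ℝ} (hC : 0 ≤ C)
    (h : ∀ x, ‖toLp 2 (A *ᵥ x)‖ ≤ C * ‖toLp 2 x‖) : ‖A‖ ≤ C := by
  rw [l2_opNorm_def]
  exact ContinuousLinearMap.opNorm_le_bound _ hC fun x => by
    simpa [toLpLin_apply] using h (ofLp x)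

theorem l2_opNorm_pow_le_bound {A : Matrix ι κ ℝ} {C : ℝ} (hC : 0 ≤ C) {r : ℕ} (hr : r ≠ 0)
    (h : ∀ x, ‖toLp 2 (A *ᵥ x)‖ ^ r ≤ C * ‖toLp 2 x‖ ^ r) : ‖A‖ ^ r ≤ C := by
  have hroot : (C ^ (r⁻¹ : ℝ)) ^ r = C := Real.rpow_inv_natCast_pow hC hr
  have hle : ‖A‖ ≤ C ^ (r⁻¹ : ℝ) := by
    refine l2_opNorm_le_bound (by positivity) fun x => ?_
    refine (pow_le_pow_iff_left₀ (norm_nonneg _) (by positivity) hr).1 ?_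
    rw [mul_pow, hroot]
    exact h x
  calc ‖A‖ ^ r ≤ (C ^ (r⁻¹ : ℝ)) ^ r := pow_le_pow_left₀ (norm_nonneg _) hle r
    _ = C := hroot

theorem l2_opNorm_mul_pow_le_of_norm_le_one [DecidableEq ι] [DecidableEq μ] {P : Matrix μ ι ℝ}
    (hP : ‖P‖ ≤ 1) (X : Matrix ι κ ℝ) (q : ℕ) :
    ‖P * X‖ ^ (2 * q + 1) ≤ ‖P * (X * Xᵀ) ^ q * X‖ := by
  set B := P * (X * Xᵀ) ^ q * X
  suffices h : ‖(P * X)ᵀ‖ ^ (2 * (2 * q + 1)) ≤ ‖B‖ ^ 2 by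
    rw [l2_opNorm_transpose, pow_mul'] at h
    exact (pow_le_pow_iff_left₀ (by positivity) (norm_nonneg B) two_ne_zero).1 h
  refine l2_opNorm_pow_le_bound (sq_nonneg _) (by positivity) fun y => ?_
  set z := Pᵀ *ᵥ y
  have hz : ‖toLp 2 z‖ ≤ ‖toLp 2 y‖ := (norm_toLp_mulVec_le Pᵀ y).trans
    (mul_le_of_le_one_left (norm_nonneg _) ((l2_opNorm_transpose P).trans_le hP))
  have hzero : gramMoment X z 0 ≤ ‖toLp 2 y‖ ^ 2 := by
    rw [gramMoment_zero, ← norm_toLp_sq]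
    gcongr
  have hone : ‖toLp 2 ((P * X)ᵀ *ᵥ y)‖ ^ 2 = gramMoment X z 1 := by
    rw [norm_toLp_sq, transpose_mul, ← mulVec_mulVec, ← zero_add 1,
      gramMoment_add_add_one X z 0 0, pow_zero, one_mulVec]
  have htop : gramMoment X z (2 * q + 1) ≤ ‖B‖ ^ 2 * ‖toLp 2 y‖ ^ 2 := by
    have hB : Bᵀ *ᵥ y = Xᵀ *ᵥ (X * Xᵀ) ^ q *ᵥ z := by
      simp only [B, z, transpose_mul, transpose_pow, transpose_transpose, mulVec_mulVec,
        Matrix.mul_assoc]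
    rw [two_mul, gramMoment_add_add_one, ← hB, ← norm_toLp_sq, ← mul_pow,
      ← l2_opNorm_transpose B]
    gcongr
    exact norm_toLp_mulVec_le _ _
  calc ‖toLp 2 ((P * X)ᵀ *ᵥ y)‖ ^ (2 * (2 * q + 1)) = gramMoment X z 1 ^ (2 * q + 1) := by
        rw [pow_mul, hone]
    _ ≤ gramMoment X z (2 * q + 1) * gramMoment X z 0 ^ (2 * q) :=
        gramMoment_one_pow_le X z (2 * q)
    _ ≤ (‖B‖ ^ 2 * ‖toLp 2 y‖ ^ 2) * (‖toLp 2 y‖ ^ 2) ^ (2 * q) := by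
        have := gramMoment_nonneg X z 0
        gcongr
    _ = ‖B‖ ^ 2 * ‖toLp 2 y‖ ^ (2 * (2 * q + 1)) := by ring

end Matrix

theorem isStarProjection_mul_transpose {ι κ R : Type*} [Fintype ι] [Fintype κ] [DecidableEq κ]
    [CommRing R] [StarRing R] [TrivialStar R] {Z : Matrix ι κ R} (hZ : Zᵀ * Z = 1) :
    IsStarProjection (Z * Zᵀ) where
  isIdempotentElem := by
    rw [IsIdempotentElem, Matrix.mul_assoc, ← Matrix.mul_assoc Zᵀ, hZ, Matrix.one_mul]
  isSelfAdjoint := by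
    rw [IsSelfAdjoint, star_eq_conjTranspose, conjTranspose_eq_transpose_of_trivial,
      transpose_mul, transpose_transpose]

theorem euclNorm_eq_norm_toLp {n : ℕ} (x : Fin n → ℝ) : euclNorm x = ‖toLp 2 x‖ := by
  rw [EuclideanSpace.norm_eq]
  simp [euclNorm]

theorem specNorm_eq_l2_opNorm {m n : ℕ} (M : Matrix (Fin m) (Fin n) ℝ) : specNorm M = ‖M‖ := by
  have hbound : ∀ r ∈ (fun x => euclNorm (M *ᵥ x) / euclNorm x) '' {x | x ≠ 0}, r ≤ ‖M‖ := by
    rintro _ ⟨x, -, rfl⟩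
    simp only [euclNorm_eq_norm_toLp]
    exact div_le_of_le_mul₀ (norm_nonneg _) (norm_nonneg _) (M.norm_toLp_mulVec_le x)
  refine le_antisymm (Real.sSup_le hbound (norm_nonneg M)) ?_
  have hnonneg : 0 ≤ specNorm M := Real.sSup_nonneg <| by
    rintro _ ⟨x, -, rfl⟩
    simp only [euclNorm_eq_norm_toLp]
    positivity
  refine M.l2_opNorm_le_bound hnonneg fun x => ?_
  rcases eq_or_ne x 0 with rfl | hx
  · simp
  have hpos : 0 < euclNorm x := by
    rw [euclNorm_eq_norm_toLp]
    simpa using hx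
  have hle : euclNorm (M *ᵥ x) / euclNorm x ≤ specNorm M := le_csSup ⟨‖M‖, hbound⟩ ⟨x, hx, rfl⟩
  rw [div_le_iff₀ hpos, euclNorm_eq_norm_toLp, euclNorm_eq_norm_toLp] at hle
  exact hle

/-- for an orthogonal projection `P = Z Zᵀ`,
`‖P X‖₂^{2q+1} ≤ ‖P (X Xᵀ)^q X‖₂`. -/
theorem stmt15 {n k m : ℕ} (Z : Matrix (Fin n) (Fin k) ℝ) (hZ : Zᵀ * Z = 1)
    (X : Matrix (Fin n) (Fin m) ℝ) (q : ℕ) :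
    specNorm (Z * Zᵀ * X) ^ (2 * q + 1) ≤ specNorm (Z * Zᵀ * (X * Xᵀ) ^ q * X) := by
  rw [specNorm_eq_l2_opNorm, specNorm_eq_l2_opNorm]
  exact l2_opNorm_mul_pow_le_of_norm_le_one ((isStarProjection_mul_transpose hZ).norm_le) X q
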